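/- For density matrices σ, τ and an orthogonal resolution of identity {E_i}, the relative entropy is bounded below by the classical relative entropy of the measurement outcome distributions: S(σ, τ) ≥ ∑_i Tr[σ E_i] (log Tr[σ E_i] − log Tr[τ E_i]). -/

import Mathlib

/-!
Diagonalize `σ = ∑ₐ λₐ |uₐ⟩⟨uₐ|` and `τ = ∑_b μ_b |v_b⟩⟨v_b|`. The Nussbaum–Szkoła distributions
`P(a, b) = λₐ |⟨uₐ, v_b⟩|²` and `Q(a, b) = μ_b |⟨uₐ, v_b⟩|²` satisfy `S(σ, τ) = D(P ‖ Q)` once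
`supp σ ⊆ supp τ`, so it suffices to compare two classical relative entropies. For probability
vectors, `D(p ‖ q) = ∫₀^∞ ∑ p (p - q) / ((1 + t) (p + t q)) dt`, and the integrand equals
`1 / (1 + t) - 1 + t ∑ q² / (p + t q)`; hence `D(p ‖ q) ≤ D(P ‖ Q)` as soon as
`∑ q² / (p + t q) ≤ ∑ Q² / (P + t Q)` for every `t > 0`. The right-hand side dominates
`2 Re Tr τY - Tr σYY* - t Tr τY*Y` for every matrix `Y` (AM-GM on each entry of `Y` in the pair
of eigenbases), and for `Y = ∑ᵢ qᵢ / (pᵢ + t qᵢ) Eᵢ` this expression equals the left-hand side.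
-/

open Matrix Kronecker
open scoped BigOperators ComplexOrder

variable {n m : Type*}

/-- Functional-calculus logarithm of a Hermitian matrix, restricted to its support
(zero eigenvalues are sent to zero). Returns 0 for non-Hermitian matrices. -/
noncomputable def matLog [Fintype n] [DecidableEq n] (A : Matrix n n ℂ) : Matrix n n ℂ :=
  if h : A.IsHermitian then
    (h.eigenvectorUnitary : Matrix n n ℂ) *
      Matrix.diagonal (fun i => (Real.log (h.eigenvalues i) : ℂ)) *
      (star (h.eigenvectorUnitary : Matrix n n ℂ))
  else 0

/-- Extended Umegaki relative entropy `S(A,B) = Tr[A(log A − log B)]` (real part). -/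
noncomputable def relEnt [Fintype n] [DecidableEq n] (A B : Matrix n n ℂ) : ℝ :=
  ((A * (matLog A - matLog B)).trace).re

/-- von Neumann entropy `S(ρ) = −Tr[ρ log ρ]`. -/
noncomputable def vnEnt [Fintype n] [DecidableEq n] (ρ : Matrix n n ℂ) : ℝ :=
  -((ρ * matLog ρ).trace).re

/-- A density matrix: positive semidefinite with unit trace. -/
def IsDensity [Fintype n] [DecidableEq n] (ρ : Matrix n n ℂ) : Prop :=
  ρ.PosSemidef ∧ ρ.trace = 1

/-- Completely positive trace-preserving map, via a Kraus representation. -/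
def IsCPTP [Fintype n] [DecidableEq n] [Fintype m] [DecidableEq m]
    (Λ : Matrix n n ℂ → Matrix m m ℂ) : Prop :=
  ∃ (ι : Type) (_ : Fintype ι) (K : ι → Matrix m n ℂ),
    (∀ A, Λ A = ∑ i, K i * A * (K i)ᴴ) ∧ (∑ i, (K i)ᴴ * K i = 1)

/-- An orthogonal resolution of the identity (projection valued measure). -/
def OrthRes [Fintype n] [DecidableEq n] {ι : Type*} [Fintype ι]
    (E : ι → Matrix n n ℂ) : Prop :=
  (∀ i, (E i).IsHermitian) ∧ (∀ i, E i * E i = E i) ∧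
  (∀ i j, i ≠ j → E i * E j = 0) ∧ (∑ i, E i = 1)

/-- A Schatten decomposition of ρ: rank-one orthogonal spectral projections. -/
def SchattenDecomp [Fintype n] [DecidableEq n]
    (ρ : Matrix n n ℂ) (lam : n → ℝ) (E : n → Matrix n n ℂ) : Prop :=
  (∀ k, 0 ≤ lam k) ∧ OrthRes E ∧ (∀ k, (E k).trace = 1) ∧
  ρ = ∑ k, (lam k : ℂ) • E k

/-- Ohya's quantum mutual entropy `I(ρ;Λ*)`. -/
noncomputable def mutEnt [Fintype n] [DecidableEq n] [Fintype m] [DecidableEq m]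
    (ρ : Matrix n n ℂ) (Λ : Matrix n n ℂ → Matrix m m ℂ) : ℝ :=
  sSup {x : ℝ | ∃ lam E, SchattenDecomp ρ lam E ∧
    x = ∑ k, lam k * relEnt (Λ (E k)) (Λ ρ)}

section

open MeasureTheory Set Filter Topology

theorem tendsto_mul_log_one_add_sub_log_add_mul {l m : ℝ} (hm : 0 < m) :
    Tendsto (fun t : ℝ => l * (Real.log (1 + t) - Real.log (l + t * m))) atTop
      (𝓝 (-(l * Real.log m))) := by
  have hratio : Tendsto (fun t : ℝ => (t⁻¹ + 1) / (l * t⁻¹ + m)) atTop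
      (𝓝 ((0 + 1) / (l * 0 + m))) :=
    (tendsto_inv_atTop_zero.add_const 1).div
      ((tendsto_inv_atTop_zero.const_mul l).add_const m) (by simpa using hm.ne')
  rw [zero_add, mul_zero, zero_add, one_div] at hratio
  have hlog := ((Real.continuousAt_log (inv_ne_zero hm.ne')).tendsto.comp hratio).const_mul l
  rw [Real.log_inv, mul_neg] at hlog
  refine hlog.congr' ?_
  filter_upwards [eventually_gt_atTop (max 0 (-l / m))] with t ht
  have ht0 : 0 < t := (le_max_left _ _).trans_lt ht
  have hd : 0 < l + t * m := by
    have := (div_lt_iff₀ hm).mp ((le_max_right _ _).trans_lt ht)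
    linarith
  rw [Function.comp_apply, ← Real.log_div (by linarith) hd.ne']
  congr 2
  field_simp

theorem hasDerivAt_mul_log_one_add_sub_log_add_mul {l m t : ℝ} (hl : 0 < l) (hm : 0 < m)
    (ht : 0 ≤ t) :
    HasDerivAt (fun t : ℝ => l * (Real.log (1 + t) - Real.log (l + t * m)))
      (l * (l - m) / ((1 + t) * (l + t * m))) t := by
  have h1 : 0 < 1 + t := by linarith
  have h2 : 0 < l + t * m := by positivity
  have d1 := ((hasDerivAt_id t).const_add 1).log h1.ne'
  have d2 := (((hasDerivAt_id t).mul_const m).const_add l).log h2.ne'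
  refine ((d1.sub d2).const_mul l).congr_deriv ?_
  simp only [id]
  field_simp
  ring

theorem integral_Ioi_mul_sub_div_of_pos {l m : ℝ} (hl : 0 < l) (hm : 0 < m) :
    IntegrableOn (fun t => l * (l - m) / ((1 + t) * (l + t * m))) (Ioi 0) ∧
      ∫ t in Ioi 0, l * (l - m) / ((1 + t) * (l + t * m)) = l * (Real.log l - Real.log m) := by
  have hderiv := fun t (ht : t ∈ Ici (0 : ℝ)) =>
    hasDerivAt_mul_log_one_add_sub_log_add_mul hl hm (t := t) ht
  have hlim := tendsto_mul_log_one_add_sub_log_add_mul (l := l) hm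
  have hval : -(l * Real.log m) - l * (Real.log (1 + 0) - Real.log (l + 0 * m)) =
      l * (Real.log l - Real.log m) := by
    simp only [add_zero, zero_mul, Real.log_one]
    ring
  have hden : ∀ t ∈ Ioi (0 : ℝ), 0 < (1 + t) * (l + t * m) := fun t (ht : 0 < t) => by
    positivity
  rcases le_total m l with hml | hlm
  · have hnonneg : ∀ t ∈ Ioi (0 : ℝ), 0 ≤ l * (l - m) / ((1 + t) * (l + t * m)) :=
      fun t ht => div_nonneg (mul_nonneg hl.le (by linarith)) (hden t ht).le
    exact ⟨integrableOn_Ioi_deriv_of_nonneg' hderiv hnonneg hlim,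
      by rw [integral_Ioi_of_hasDerivAt_of_nonneg' hderiv hnonneg hlim, hval]⟩
  · have hnonpos : ∀ t ∈ Ioi (0 : ℝ), l * (l - m) / ((1 + t) * (l + t * m)) ≤ 0 :=
      fun t ht => div_nonpos_of_nonpos_of_nonneg (mul_nonpos_of_nonneg_of_nonpos hl.le
        (by linarith)) (hden t ht).le
    exact ⟨integrableOn_Ioi_deriv_of_nonpos' hderiv hnonpos hlim,
      by rw [integral_Ioi_of_hasDerivAt_of_nonpos' hderiv hnonpos hlim, hval]⟩

theorem integral_Ioi_mul_sub_div {l m : ℝ} (hl : 0 ≤ l) (hm : 0 ≤ m) (hlm : m = 0 → l = 0) :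
    IntegrableOn (fun t => l * (l - m) / ((1 + t) * (l + t * m))) (Ioi 0) ∧
      ∫ t in Ioi 0, l * (l - m) / ((1 + t) * (l + t * m)) = l * (Real.log l - Real.log m) := by
  rcases hl.eq_or_lt with rfl | hl
  · simp
  rcases hm.eq_or_lt with rfl | hm
  · exact absurd (hlm rfl) hl.ne'
  exact integral_Ioi_mul_sub_div_of_pos hl hm

theorem integral_Ioi_sum_mul_sub_div {ι : Type*} [Fintype ι] {p q : ι → ℝ} (hp : ∀ i, 0 ≤ p i)
    (hq : ∀ i, 0 ≤ q i) (hpq : ∀ i, q i = 0 → p i = 0) :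
    IntegrableOn (fun t => ∑ i, p i * (p i - q i) / ((1 + t) * (p i + t * q i))) (Ioi 0) ∧
      ∫ t in Ioi 0, ∑ i, p i * (p i - q i) / ((1 + t) * (p i + t * q i)) =
        ∑ i, p i * (Real.log (p i) - Real.log (q i)) := by
  have h := fun i => integral_Ioi_mul_sub_div (hp i) (hq i) (hpq i)
  exact ⟨integrable_finsetSum _ fun i _ => (h i).1, by
    rw [integral_finsetSum _ fun i _ => (h i).1]
    exact Finset.sum_congr rfl fun i _ => (h i).2⟩

theorem mul_sub_div_eq {l m t : ℝ} (hl : 0 ≤ l) (hm : 0 ≤ m) (ht : 0 < t) :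
    l * (l - m) / ((1 + t) * (l + t * m)) = l / (1 + t) - m + t * (m ^ 2 / (l + t * m)) := by
  rcases (by positivity : 0 ≤ l + t * m).eq_or_lt with hd | hd
  · obtain ⟨rfl, rfl⟩ : l = 0 ∧ m = 0 := by
      constructor <;> nlinarith [mul_nonneg ht.le hm]
    simp
  have h1 : 1 + t ≠ 0 := by positivity
  have h2 : l + m * t ≠ 0 := by rw [mul_comm]; exact hd.ne'
  field_simp
  ring

theorem sum_mul_sub_div_eq {ι : Type*} [Fintype ι] {p q : ι → ℝ} (hp : ∀ i, 0 ≤ p i)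
    (hq : ∀ i, 0 ≤ q i) {t : ℝ} (ht : 0 < t) :
    ∑ i, p i * (p i - q i) / ((1 + t) * (p i + t * q i)) =
      (∑ i, p i) / (1 + t) - ∑ i, q i + t * ∑ i, q i ^ 2 / (p i + t * q i) := by
  simp only [mul_sub_div_eq (hp _) (hq _) ht, Finset.sum_add_distrib, Finset.sum_sub_distrib,
    Finset.sum_div, Finset.mul_sum]

theorem sum_mul_log_sub_log_le {ι κ : Type*} [Fintype ι] [Fintype κ] {p q : ι → ℝ}
    {P Q : κ → ℝ} (hp : ∀ i, 0 ≤ p i) (hq : ∀ i, 0 ≤ q i) (hpq : ∀ i, q i = 0 → p i = 0)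
    (hP : ∀ k, 0 ≤ P k) (hQ : ∀ k, 0 ≤ Q k) (hPQ : ∀ k, Q k = 0 → P k = 0)
    (hpP : ∑ i, p i = ∑ k, P k) (hqQ : ∑ i, q i = ∑ k, Q k)
    (hchi : ∀ t, 0 < t → ∑ i, q i ^ 2 / (p i + t * q i) ≤ ∑ k, Q k ^ 2 / (P k + t * Q k)) :
    ∑ i, p i * (Real.log (p i) - Real.log (q i)) ≤
      ∑ k, P k * (Real.log (P k) - Real.log (Q k)) := by
  obtain ⟨hint, hpq_eq⟩ := integral_Ioi_sum_mul_sub_div hp hq hpq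
  obtain ⟨hInt, hPQ_eq⟩ := integral_Ioi_sum_mul_sub_div hP hQ hPQ
  rw [← hpq_eq, ← hPQ_eq]
  refine setIntegral_mono_on hint hInt measurableSet_Ioi fun t (ht : 0 < t) => ?_
  rw [sum_mul_sub_div_eq hp hq ht, sum_mul_sub_div_eq hP hQ ht, hpP, hqQ]
  gcongr
  exact hchi t ht

-- The right-hand side is `Q² / (P + t Q)` with `P = l |w|²`, `Q = m |w|²`.
theorem two_mul_re_sub_le {l m t : ℝ} (hl : 0 ≤ l) (hm : 0 ≤ m) (ht : 0 < t) (w z : ℂ) :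
    2 * (m * (star w * z).re) - (l + t * m) * Complex.normSq z ≤
      (m * Complex.normSq w) ^ 2 / (l * Complex.normSq w + t * (m * Complex.normSq w)) := by
  rcases (by positivity : 0 ≤ l + t * m).eq_or_lt with hd | hd
  · obtain rfl : m = 0 := by nlinarith [mul_nonneg ht.le hm]
    simpa using mul_nonneg hl (Complex.normSq_nonneg z)
  rcases eq_or_ne w 0 with rfl | hw
  · simpa using mul_nonneg hd.le (Complex.normSq_nonneg z)
  have hre : (star w * z).re ≤ ‖w‖ * ‖z‖ :=
    (Complex.re_le_norm _).trans (by rw [norm_mul, norm_star])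
  rw [Complex.normSq_eq_norm_sq, Complex.normSq_eq_norm_sq,
    show (m * ‖w‖ ^ 2) ^ 2 / (l * ‖w‖ ^ 2 + t * (m * ‖w‖ ^ 2)) = m ^ 2 * ‖w‖ ^ 2 / (l + t * m) by
      field_simp, le_div_iff₀ hd]
  -- AM-GM: `2 m ‖w‖ ‖z‖ ≤ d ‖z‖² + m² ‖w‖² / d` with `d = l + t m`
  nlinarith [sq_nonneg ((l + t * m) * ‖z‖ - m * ‖w‖), mul_le_mul_of_nonneg_left hre hm]

theorem mul_mul_log_mul_sub_log_mul {l m T : ℝ} (h : m = 0 → l * T = 0) :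
    l * T * (Real.log (l * T) - Real.log (m * T)) = T * (l * (Real.log l - Real.log m)) := by
  rcases eq_or_ne T 0 with rfl | hT
  · simp
  rcases eq_or_ne l 0 with rfl | hl
  · simp
  rcases eq_or_ne m 0 with rfl | hm
  · exact absurd (h rfl) (mul_ne_zero hl hT)
  rw [Real.log_mul hl hT, Real.log_mul hm hT]
  ring

-- `2 c q - c² d` is maximal at `c = q / d`, with maximum `q² / d`.
theorem sq_div_eq_two_mul_sub (q d : ℝ) : q ^ 2 / d = 2 * (q / d * q) - (q / d) ^ 2 * d := by
  rcases eq_or_ne d 0 with rfl | hd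
  · simp
  field_simp
  ring

end

namespace Matrix

section

variable {ι : Type*} [Fintype ι] {E : ι → Matrix n n ℂ}

theorem star_sum_smul_of_isHermitian (hE : ∀ i, (E i).IsHermitian) (c : ι → ℝ) :
    star (∑ i, (c i : ℂ) • E i) = ∑ i, (c i : ℂ) • E i := by
  simp only [star_sum, star_smul, Complex.star_def, Complex.conj_ofReal,
    Matrix.star_eq_conjTranspose, (hE _).eq]

theorem re_trace_mul_sum_smul [Fintype n] (ρ : Matrix n n ℂ) (c : ι → ℝ) :
    (ρ * ∑ i, (c i : ℂ) • E i).trace.re = ∑ i, c i * (ρ * E i).trace.re := by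
  simp only [Matrix.mul_sum, Matrix.mul_smul, Matrix.trace_sum, Matrix.trace_smul, Complex.re_sum,
    smul_eq_mul, Complex.re_ofReal_mul]

end

variable [Fintype n]

theorem mul_star_apply_self (Z : Matrix n n ℂ) (a : n) :
    (Z * star Z) a a = ∑ b, (Complex.normSq (Z a b) : ℂ) := by
  simp only [mul_apply, star_apply, Complex.star_def, Complex.mul_conj]

theorem star_mul_apply (W Z : Matrix n n ℂ) (b c : n) :
    (star W * Z) b c = ∑ a, star (W a b) * Z a c := by
  simp only [mul_apply, star_apply]

theorem star_mul_apply_self (Z : Matrix n n ℂ) (b : n) :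
    (star Z * Z) b b = ∑ a, (Complex.normSq (Z a b) : ℂ) := by
  simp only [mul_apply, star_apply, Complex.star_def, Complex.normSq_eq_conj_mul_self]

variable {ρ σ τ E : Matrix n n ℂ}

theorem trace_mul_eq_trace_conjTranspose_mul_mul (hE : E.IsHermitian) (hE₂ : IsIdempotentElem E) :
    (ρ * E).trace = (Eᴴ * ρ * E).trace := by
  rw [hE.eq, ← trace_mul_cycle, Matrix.mul_assoc, hE₂.eq]

theorem PosSemidef.re_trace_mul_nonneg (hρ : ρ.PosSemidef) (hE : E.IsHermitian)
    (hE₂ : IsIdempotentElem E) : 0 ≤ (ρ * E).trace.re := by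
  rw [trace_mul_eq_trace_conjTranspose_mul_mul hE hE₂]
  exact (Complex.nonneg_iff.mp (hρ.conjTranspose_mul_mul_same E).trace_nonneg).1

theorem PosSemidef.re_trace_mul_eq_zero_of_ker_le (hτ : τ.PosSemidef)
    (hsupp : ∀ v, τ *ᵥ v = 0 → σ *ᵥ v = 0) (hE : E.IsHermitian) (hE₂ : IsIdempotentElem E)
    (h : (τ * E).trace.re = 0) : (σ * E).trace.re = 0 := by
  have hpsd := hτ.conjTranspose_mul_mul_same E
  have hzero : Eᴴ * τ * E = 0 := by
    refine hpsd.trace_eq_zero_iff.mp (Complex.ext ?_ ?_)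
    · rwa [← trace_mul_eq_trace_conjTranspose_mul_mul hE hE₂]
    · exact (Complex.nonneg_iff.mp hpsd.trace_nonneg).2.symm
  have hσE : σ * E = 0 := by
    refine ext_iff_mulVec.mpr fun v => ?_
    rw [← mulVec_mulVec, zero_mulVec]
    refine hsupp _ ((hτ.dotProduct_mulVec_zero_iff _).mp ?_)
    rw [star_mulVec, ← dotProduct_mulVec, mulVec_mulVec, mulVec_mulVec, hzero, zero_mulVec,
      dotProduct_zero]
  rw [hσE, trace_zero, Complex.zero_re]

variable [DecidableEq n]

theorem mul_diagonal_mul_star_apply_self (X : Matrix n n ℂ) (d : n → ℂ) (a : n) :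
    (X * diagonal d * star X) a a = ∑ b, d b * Complex.normSq (X a b) := by
  rw [mul_apply]
  simp only [mul_diagonal, star_apply, Complex.star_def]
  exact Finset.sum_congr rfl fun b _ => by rw [mul_comm (X a b), mul_assoc, Complex.mul_conj]

namespace IsHermitian

variable {A B : Matrix n n ℂ} (hA : A.IsHermitian) (hB : B.IsHermitian)

theorem star_eigenvectorUnitary_mul_mul :
    star (hA.eigenvectorUnitary : Matrix n n ℂ) * A * hA.eigenvectorUnitary =
      diagonal fun a => (hA.eigenvalues a : ℂ) := by
  have h := hA.conjStarAlgAut_star_eigenvectorUnitary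
  rw [Unitary.conjStarAlgAut_star_apply] at h
  exact h

theorem trace_mul_eq_sum (X : Matrix n n ℂ) :
    (A * X).trace = ∑ a, (hA.eigenvalues a : ℂ) *
      (star (hA.eigenvectorUnitary : Matrix n n ℂ) * X * hA.eigenvectorUnitary) a a := by
  set U : Matrix n n ℂ := ↑hA.eigenvectorUnitary
  have hUU : U * star U = 1 := Unitary.coe_mul_star_self _
  calc (A * X).trace = (star U * A * U * (star U * X * U)).trace := by
        rw [show star U * A * U * (star U * X * U) = star U * (A * X) * U by
          simp only [Matrix.mul_assoc]; rw [← Matrix.mul_assoc U, hUU, Matrix.one_mul],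
          trace_mul_cycle, hUU, Matrix.one_mul]
    _ = _ := by
        rw [hA.star_eigenvectorUnitary_mul_mul]
        simp [trace, diagonal_mul]

noncomputable def eigenbasisChange : Matrix n n ℂ :=
  star (hA.eigenvectorUnitary : Matrix n n ℂ) * hB.eigenvectorUnitary

theorem eigenbasisChange_mul_star : hA.eigenbasisChange hB * star (hA.eigenbasisChange hB) = 1 :=
  Unitary.coe_mul_star_self (star hA.eigenvectorUnitary * hB.eigenvectorUnitary)

theorem star_mul_eigenbasisChange : star (hA.eigenbasisChange hB) * hA.eigenbasisChange hB = 1 :=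
  Unitary.coe_star_mul_self (star hA.eigenvectorUnitary * hB.eigenvectorUnitary)

noncomputable def overlap (a b : n) : ℝ := Complex.normSq (hA.eigenbasisChange hB a b)

theorem sum_overlap_right (a : n) : ∑ b, hA.overlap hB a b = 1 := by
  simpa only [overlap, mul_star_apply_self, Complex.re_sum, Complex.ofReal_re, one_apply_eq,
    Complex.one_re] using congrArg (fun M => (M a a).re) (hA.eigenbasisChange_mul_star hB)

theorem sum_overlap_left (b : n) : ∑ a, hA.overlap hB a b = 1 := by
  simpa only [overlap, star_mul_apply_self, Complex.re_sum, Complex.ofReal_re, one_apply_eq,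
    Complex.one_re] using congrArg (fun M => (M b b).re) (hA.star_mul_eigenbasisChange hB)

theorem overlap_self (a b : n) : hA.overlap hA a b = if a = b then 1 else 0 := by
  rw [overlap, eigenbasisChange, Unitary.coe_star_mul_self, one_apply]
  split_ifs <;> simp

theorem re_trace_mul_matLog :
    (A * matLog B).trace.re =
      ∑ a, ∑ b, hA.overlap hB a b * (hA.eigenvalues a * Real.log (hB.eigenvalues b)) := by
  have hconj : ∀ D : Matrix n n ℂ,
      star (hA.eigenvectorUnitary : Matrix n n ℂ) * (hB.eigenvectorUnitary * D *
        star (hB.eigenvectorUnitary : Matrix n n ℂ)) * hA.eigenvectorUnitary =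
      hA.eigenbasisChange hB * D * star (hA.eigenbasisChange hB) := fun D => by
    simp only [eigenbasisChange, star_mul, star_star, Matrix.mul_assoc]
  rw [matLog, dif_pos hB, hA.trace_mul_eq_sum, Complex.re_sum]
  refine Finset.sum_congr rfl fun a _ => ?_
  rw [hconj, mul_diagonal_mul_star_apply_self, Finset.mul_sum, Complex.re_sum]
  refine Finset.sum_congr rfl fun b _ => ?_
  rw [← Complex.ofReal_mul, ← Complex.ofReal_mul, Complex.ofReal_re, overlap]
  ring

theorem relEnt_eq_sum_overlap :
    relEnt A B = ∑ a, ∑ b, hA.overlap hB a b *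
      (hA.eigenvalues a * (Real.log (hA.eigenvalues a) - Real.log (hB.eigenvalues b))) := by
  have hAA : (A * matLog A).trace.re =
      ∑ a, ∑ b, hA.overlap hB a b * (hA.eigenvalues a * Real.log (hA.eigenvalues a)) := by
    simp only [hA.re_trace_mul_matLog hA, overlap_self, ite_mul, one_mul, zero_mul,
      Finset.sum_ite_eq, Finset.mem_univ, if_true, ← Finset.sum_mul, sum_overlap_right]
  rw [relEnt, Matrix.mul_sub, trace_sub, Complex.sub_re, hAA, hA.re_trace_mul_matLog hB,
    ← Finset.sum_sub_distrib]
  refine Finset.sum_congr rfl fun a _ => ?_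
  rw [← Finset.sum_sub_distrib]
  exact Finset.sum_congr rfl fun b _ => by ring

theorem eigenvalues_mul_overlap_eq_zero (hsupp : ∀ v, B *ᵥ v = 0 → A *ᵥ v = 0) (a : n)
    {b : n} (hb : hB.eigenvalues b = 0) : hA.eigenvalues a * hA.overlap hB a b = 0 := by
  set U : Matrix n n ℂ := ↑hA.eigenvectorUnitary
  set V : Matrix n n ℂ := ↑hB.eigenvectorUnitary
  have hker : A *ᵥ (V *ᵥ Pi.single b 1) = 0 := by
    refine hsupp _ ?_
    rw [eigenvectorUnitary_mulVec, hB.mulVec_eigenvectorBasis, hb, zero_smul]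
  have hUU : U * star U = 1 := Unitary.coe_mul_star_self _
  have hdiag : (diagonal fun a => (hA.eigenvalues a : ℂ)) * (star U * V) = star U * A * V :=
    calc _ = star U * A * U * (star U * V) := by rw [hA.star_eigenvectorUnitary_mul_mul]
      _ = star U * A * V := by
        rw [← Matrix.mul_assoc, Matrix.mul_assoc (star U * A), hUU, Matrix.mul_one]
  have hentry : (hA.eigenvalues a : ℂ) * (star U * V) a b = 0 := by
    have h : (star U * A * V) *ᵥ Pi.single b 1 = 0 := by
      rw [← mulVec_mulVec, ← mulVec_mulVec, hker, mulVec_zero]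
    rw [← hdiag, mulVec_single_one] at h
    simpa only [col_apply, diagonal_mul, Pi.zero_apply] using congrFun h a
  rcases mul_eq_zero.mp hentry with h | h
  · rw [Complex.ofReal_eq_zero.mp h, zero_mul]
  · rw [overlap, eigenbasisChange, h, Complex.normSq_zero, mul_zero]

noncomputable def nussbaumSzkolaFst (k : n × n) : ℝ := hA.eigenvalues k.1 * hA.overlap hB k.1 k.2

noncomputable def nussbaumSzkolaSnd (k : n × n) : ℝ := hB.eigenvalues k.2 * hA.overlap hB k.1 k.2

theorem sum_nussbaumSzkolaFst : ∑ k, hA.nussbaumSzkolaFst hB k = A.trace.re := by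
  simp only [nussbaumSzkolaFst, Fintype.sum_prod_type, ← Finset.mul_sum, sum_overlap_right,
    mul_one, hA.trace_eq_sum_eigenvalues, Complex.re_sum]
  rfl

theorem sum_nussbaumSzkolaSnd : ∑ k, hA.nussbaumSzkolaSnd hB k = B.trace.re := by
  simp only [nussbaumSzkolaSnd, Fintype.sum_prod_type_right, ← Finset.mul_sum, sum_overlap_left,
    mul_one, hB.trace_eq_sum_eigenvalues, Complex.re_sum]
  rfl

variable {hA hB} in
theorem nussbaumSzkolaFst_eq_zero (hsupp : ∀ v, B *ᵥ v = 0 → A *ᵥ v = 0) {k : n × n}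
    (hk : hA.nussbaumSzkolaSnd hB k = 0) : hA.nussbaumSzkolaFst hB k = 0 := by
  rcases mul_eq_zero.mp hk with h | h
  · exact hA.eigenvalues_mul_overlap_eq_zero hB hsupp k.1 h
  · rw [nussbaumSzkolaFst, h, mul_zero]

theorem relEnt_eq_sum_nussbaumSzkola (hsupp : ∀ v, B *ᵥ v = 0 → A *ᵥ v = 0) :
    relEnt A B = ∑ k, hA.nussbaumSzkolaFst hB k *
      (Real.log (hA.nussbaumSzkolaFst hB k) - Real.log (hA.nussbaumSzkolaSnd hB k)) := by
  rw [hA.relEnt_eq_sum_overlap hB, Fintype.sum_prod_type]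
  refine Finset.sum_congr rfl fun a _ => Finset.sum_congr rfl fun b _ => ?_
  exact (mul_mul_log_mul_sub_log_mul
    fun hb => hA.eigenvalues_mul_overlap_eq_zero hB hsupp a hb).symm

theorem two_mul_re_trace_sub_eq_sum (t : ℝ) (Y : Matrix n n ℂ) :
    2 * (B * Y).trace.re - (A * (Y * star Y)).trace.re - t * (B * (star Y * Y)).trace.re =
      ∑ b, ∑ a,
        (2 * (hB.eigenvalues b * (star (hA.eigenbasisChange hB a b) *
          (star (hA.eigenvectorUnitary : Matrix n n ℂ) * Y * hB.eigenvectorUnitary) a b).re) -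
        (hA.eigenvalues a + t * hB.eigenvalues b) * Complex.normSq
          ((star (hA.eigenvectorUnitary : Matrix n n ℂ) * Y * hB.eigenvectorUnitary) a b)) := by
  set U : Matrix n n ℂ := ↑hA.eigenvectorUnitary
  set V : Matrix n n ℂ := ↑hB.eigenvectorUnitary
  set W := hA.eigenbasisChange hB
  set Z := star U * Y * V
  have hUU : U * star U = 1 := Unitary.coe_mul_star_self _
  have hVV : V * star V = 1 := Unitary.coe_mul_star_self _
  have hBY : star V * Y * V = star W * Z := by
    simp only [W, Z, eigenbasisChange, star_mul, star_star, Matrix.mul_assoc]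
    rw [← Matrix.mul_assoc U, hUU, Matrix.one_mul]
  have hAYY : star U * (Y * star Y) * U = Z * star Z := by
    simp only [Z, star_mul, star_star, Matrix.mul_assoc]
    rw [← Matrix.mul_assoc V, hVV, Matrix.one_mul]
  have hBYY : star V * (star Y * Y) * V = star Z * Z := by
    simp only [Z, star_mul, star_star, Matrix.mul_assoc]
    rw [← Matrix.mul_assoc U, hUU, Matrix.one_mul]
  rw [hB.trace_mul_eq_sum, hA.trace_mul_eq_sum, hB.trace_mul_eq_sum, hBY, hAYY, hBYY]
  simp only [mul_star_apply_self, star_mul_apply_self, star_mul_apply, Complex.re_sum,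
    Complex.re_ofReal_mul, Complex.ofReal_re, Finset.mul_sum]
  rw [Finset.sum_comm (s := Finset.univ) (t := Finset.univ)
    (f := fun a b => hA.eigenvalues a * Complex.normSq (Z a b)), ← Finset.sum_sub_distrib,
    ← Finset.sum_sub_distrib]
  refine Finset.sum_congr rfl fun b _ => ?_
  rw [← Finset.sum_sub_distrib, ← Finset.sum_sub_distrib]
  exact Finset.sum_congr rfl fun a _ => by ring

end IsHermitian

section

variable {A B : Matrix n n ℂ}

theorem PosSemidef.nussbaumSzkolaFst_nonneg (hA : A.PosSemidef) (hB : B.IsHermitian)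
    (k : n × n) : 0 ≤ hA.1.nussbaumSzkolaFst hB k :=
  mul_nonneg (hA.eigenvalues_nonneg _) (Complex.normSq_nonneg _)

theorem PosSemidef.nussbaumSzkolaSnd_nonneg (hA : A.IsHermitian) (hB : B.PosSemidef)
    (k : n × n) : 0 ≤ hA.nussbaumSzkolaSnd hB.1 k :=
  mul_nonneg (hB.eigenvalues_nonneg _) (Complex.normSq_nonneg _)

theorem PosSemidef.two_mul_re_trace_sub_le (hA : A.PosSemidef) (hB : B.PosSemidef) {t : ℝ}
    (ht : 0 < t) (Y : Matrix n n ℂ) :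
    2 * (B * Y).trace.re - (A * (Y * star Y)).trace.re - t * (B * (star Y * Y)).trace.re ≤
      ∑ k, hA.1.nussbaumSzkolaSnd hB.1 k ^ 2 /
        (hA.1.nussbaumSzkolaFst hB.1 k + t * hA.1.nussbaumSzkolaSnd hB.1 k) := by
  rw [hA.1.two_mul_re_trace_sub_eq_sum hB.1, Fintype.sum_prod_type_right]
  exact Finset.sum_le_sum fun b _ => Finset.sum_le_sum fun a _ =>
    two_mul_re_sub_le (hA.eigenvalues_nonneg a) (hB.eigenvalues_nonneg b) ht _ _

end

end Matrix

section

variable [Fintype n] [DecidableEq n] {ι : Type*} [Fintype ι] {E : ι → Matrix n n ℂ}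

theorem OrthRes.sum_smul_mul_sum_smul (hE : OrthRes E) (c d : ι → ℂ) :
    (∑ i, c i • E i) * (∑ i, d i • E i) = ∑ i, (c i * d i) • E i := by
  rw [Finset.sum_mul_sum]
  refine Finset.sum_congr rfl fun i _ => ?_
  rw [Finset.sum_eq_single i (fun j _ hj => by rw [smul_mul_smul, hE.2.2.1 i j hj.symm, smul_zero])
    (by simp), smul_mul_smul, hE.2.1 i]

theorem OrthRes.sum_re_trace_mul (hE : OrthRes E) (ρ : Matrix n n ℂ) :
    ∑ i, (ρ * E i).trace.re = ρ.trace.re := by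
  rw [← Complex.re_sum, ← Matrix.trace_sum, ← Matrix.mul_sum, hE.2.2.2, Matrix.mul_one]

theorem OrthRes.sum_sq_div_le_nussbaumSzkola (hE : OrthRes E) {σ τ : Matrix n n ℂ}
    (hσ : σ.PosSemidef) (hτ : τ.PosSemidef) {t : ℝ} (ht : 0 < t) :
    ∑ i, (τ * E i).trace.re ^ 2 / ((σ * E i).trace.re + t * (τ * E i).trace.re) ≤
      ∑ k, hσ.1.nussbaumSzkolaSnd hτ.1 k ^ 2 /
        (hσ.1.nussbaumSzkolaFst hτ.1 k + t * hσ.1.nussbaumSzkolaSnd hτ.1 k) := by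
  set p := fun i => (σ * E i).trace.re
  set q := fun i => (τ * E i).trace.re
  set c := fun i => q i / (p i + t * q i)
  set Y := ∑ i, (c i : ℂ) • E i
  have hY : star Y = Y := Matrix.star_sum_smul_of_isHermitian hE.1 c
  have hYY : Y * Y = ∑ i, ((c i * c i : ℝ) : ℂ) • E i := by
    rw [hE.sum_smul_mul_sum_smul]
    push_cast
    rfl
  calc ∑ i, q i ^ 2 / (p i + t * q i)
      = 2 * ∑ i, c i * q i - ∑ i, c i * c i * p i - t * ∑ i, c i * c i * q i := by
        simp only [Finset.mul_sum, ← Finset.sum_sub_distrib]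
        refine Finset.sum_congr rfl fun i _ => ?_
        rw [sq_div_eq_two_mul_sub]
        ring
    _ = 2 * (τ * Y).trace.re - (σ * (Y * star Y)).trace.re - t * (τ * (star Y * Y)).trace.re := by
        rw [hY, hYY, Matrix.re_trace_mul_sum_smul, Matrix.re_trace_mul_sum_smul,
          Matrix.re_trace_mul_sum_smul]
    _ ≤ _ := hσ.two_mul_re_trace_sub_le hτ ht Y

end

/-- Relative entropy dominates the classical relative entropy of measurement
outcome distributions. -/
theorem stmt9_measured_relEnt {ι : Type*} [Fintype ι]
    [Fintype n] [DecidableEq n]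
    (σ τ : Matrix n n ℂ) (hσ : IsDensity σ) (hτ : IsDensity τ)
    (hsupp : ∀ v : n → ℂ, τ.mulVec v = 0 → σ.mulVec v = 0)
    (E : ι → Matrix n n ℂ) (hE : OrthRes E) :
    relEnt σ τ ≥ ∑ i, ((σ * E i).trace).re *
      (Real.log ((σ * E i).trace).re - Real.log ((τ * E i).trace).re) := by
  obtain ⟨hσ, hσ₁⟩ := hσ
  obtain ⟨hτ, hτ₁⟩ := hτ
  rw [ge_iff_le, hσ.1.relEnt_eq_sum_nussbaumSzkola hτ.1 hsupp]
  refine sum_mul_log_sub_log_le (fun i => hσ.re_trace_mul_nonneg (hE.1 i) (hE.2.1 i))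
    (fun i => hτ.re_trace_mul_nonneg (hE.1 i) (hE.2.1 i))
    (fun i => hτ.re_trace_mul_eq_zero_of_ker_le hsupp (hE.1 i) (hE.2.1 i))
    (hσ.nussbaumSzkolaFst_nonneg hτ.1) (hτ.nussbaumSzkolaSnd_nonneg hσ.1)
    (fun _ => Matrix.IsHermitian.nussbaumSzkolaFst_eq_zero hsupp) ?_ ?_
    (fun _ ht => hE.sum_sq_div_le_nussbaumSzkola hσ hτ ht)
  · rw [hE.sum_re_trace_mul, hσ.1.sum_nussbaumSzkolaFst, hσ₁]
  · rw [hE.sum_re_trace_mul, hσ.1.sum_nussbaumSzkolaSnd, hτ₁]
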